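/- arXiv:1806.11370 — 3 statements merged into one kernel-verified Lean document; each statement's English description precedes it below -/
import Mathlib

section
/- Let (Ω, 𝓖, μ) be a probability space with a filtration (𝓕_t)_{t≥1}, and let (A_t)_{t≥1} be a sequence of {0,1}-valued random variables such that A_t is 𝓕_t-measurable for every t. For t ≥ 1 let p̂_{0,t} = (1/t)·#{s ≤ t : A_s = 0} be the proportion of the first t assignments equal to 0, let π_t be (a version of) the conditional probability P(A_{t+1} = 0 | 𝓕_t), and set F_t = π_t − p̂_{0,t}. Fix ρ_0 ∈ [0,1]. Suppose that on a set of probability 1 the following holds: for every ε > 0 there exist a (random) time T and a number c > 0 such that for all t > T, F_t < −c whenever p̂_{0,t} > ρ_0 + ε, and F_t > c whenever p̂_{0,t} < ρ_0 − ε. Then p̂_{0,t} → ρ_0 almost surely as t → ∞. -/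
/-!
Let `ξ_t` be the indicator of `A_{t+1} = 0`. Counting gives the recursion
`p̂_{t+1} = p̂_t + (F_t + η_t) / (t + 1)` with `η_t = ξ_t - P(A_{t+1} = 0 | 𝓕_t)`. The partial sums
of `η_t / (t + 1)` form a martingale with increments bounded by `2 / (t + 1)`; being bounded in
`L²`, it converges almost surely. Along such a path the noise is eventually negligible. Above
`ρ₀ + ε` the drift pulls down by at least `c / (t + 1)` per step and `∑ 1 / (t + 1) = ∞`, so the
path enters `(-∞, ρ₀ + ε / 2]`; as the steps shrink to zero and the drift is downwards on every
excursion above `ρ₀ + ε / 2`, it never climbs back above `ρ₀ + ε`. Applying the same argument to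
`-p̂` gives the lower bound.
-/

open MeasureTheory Filter Finset Topology

lemma eq_add_sum_Ico_of_forall_eq_add {x g e : ℕ → ℝ} {r u : ℕ} (hru : r ≤ u)
    (hrec : ∀ t, r ≤ t → x (t + 1) = x t + g t + e t) :
    x u = x r + ∑ s ∈ Ico r u, g s + ∑ s ∈ Ico r u, e s := by
  induction u, hru using Nat.le_induction with
  | base => simp
  | succ u hru ih =>
    rw [hrec u hru, ih, sum_Ico_succ_top hru, sum_Ico_succ_top hru]
    ring

lemma CauchySeq.eventually_forall_abs_sum_Ico_lt {e : ℕ → ℝ}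
    (he : CauchySeq fun n => ∑ i ∈ range n, e i) {δ : ℝ} (hδ : 0 < δ) :
    ∀ᶠ r in atTop, ∀ u ≥ r, |∑ i ∈ Ico r u, e i| < δ := by
  obtain ⟨N, hN⟩ := Metric.cauchySeq_iff.1 he δ hδ
  filter_upwards [eventually_ge_atTop N] with r hr u hu
  rw [sum_Ico_eq_sub _ hu, ← Real.dist_eq]
  exact hN u (hr.trans hu) r hr

section Drift

variable {x γ F e : ℕ → ℝ}

lemma frequently_le_of_drift (hrec : ∀ᶠ t in atTop, x (t + 1) = x t + γ t * F t + e t)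
    (hγ : ∀ t, 0 ≤ γ t) (hγsum : Tendsto (fun n => ∑ t ∈ range n, γ t) atTop atTop)
    (he : CauchySeq fun n => ∑ t ∈ range n, e t) {a c : ℝ} (hc : 0 < c)
    (hdrift : ∀ᶠ t in atTop, a < x t → F t < -c) :
    ∃ᶠ t in atTop, x t ≤ a := by
  intro habove
  simp only [not_le] at habove
  obtain ⟨N, hN⟩ := eventually_atTop.1 <| ((hrec.and hdrift).and habove).and
    (he.eventually_forall_abs_sum_Ico_lt one_pos)
  have hrecN t (ht : N ≤ t) := (hN t ht).1.1.1
  have habove t (ht : N ≤ t) := (hN t ht).1.2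
  have hdriftN t (ht : N ≤ t) : F t < -c := (hN t ht).1.1.2 (habove t ht)
  have hbound : ∀ u ≥ N, x u ≤ x N + 1 - c * ∑ s ∈ Ico N u, γ s := by
    intro u hu
    have hF : ∑ s ∈ Ico N u, γ s * F s ≤ ∑ s ∈ Ico N u, -c * γ s :=
      sum_le_sum fun s hs => by nlinarith [hdriftN s (mem_Ico.1 hs).1, hγ s]
    rw [← mul_sum] at hF
    linarith [eq_add_sum_Ico_of_forall_eq_add hu hrecN, (abs_lt.1 ((hN N le_rfl).2 u hu)).2]
  have hdiv : Tendsto (fun u => x N + 1 - c * ∑ s ∈ Ico N u, γ s) atTop atBot := by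
    refine tendsto_atBot_add_const_left _ _ (tendsto_neg_atTop_atBot.comp ?_)
    refine (Tendsto.const_mul_atTop hc ?_)
    refine (tendsto_atTop_add_const_right _ (-∑ s ∈ range N, γ s) hγsum).congr' ?_
    filter_upwards [eventually_ge_atTop N] with u hu
    rw [sum_Ico_eq_sub _ hu, sub_eq_add_neg]
  obtain ⟨u, hu, hlow⟩ := ((eventually_ge_atTop N).and (hdiv.eventually_le_atBot a)).exists
  linarith [hbound u hu, habove u hu]

lemma eventually_lt_of_drift (hrec : ∀ᶠ t in atTop, x (t + 1) = x t + γ t * F t + e t)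
    (hγ : ∀ t, 0 ≤ γ t) (hγsum : Tendsto (fun n => ∑ t ∈ range n, γ t) atTop atTop)
    (he : CauchySeq fun n => ∑ t ∈ range n, e t)
    (hstep : Tendsto (fun t => x (t + 1) - x t) atTop (𝓝 0)) {ρ : ℝ}
    (hdrift : ∀ ε > 0, ∃ c > 0, ∀ᶠ t in atTop, ρ + ε < x t → F t < -c) :
    ∀ ε > 0, ∀ᶠ t in atTop, x t < ρ + ε := by
  intro ε hε
  obtain ⟨c, hc, hdrift⟩ := hdrift (ε / 2) (by positivity)
  obtain ⟨N, hN⟩ := eventually_atTop.1 <| ((hrec.and hdrift).and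
    ((hstep.eventually (gt_mem_nhds (by positivity : 0 < ε / 4))))).and
    (he.eventually_forall_abs_sum_Ico_lt (by positivity : 0 < ε / 4))
  have hrecN t (ht : N ≤ t) := (hN t ht).1.1.1
  have hdriftN t (ht : N ≤ t) := (hN t ht).1.1.2
  have hstepN t (ht : N ≤ t) := (hN t ht).1.2
  have hnoiseN t (ht : N ≤ t) := (hN t ht).2
  obtain ⟨t₀, ht₀, hxt₀⟩ :=
    (frequently_le_of_drift hrec hγ hγsum he hc hdrift).forall_exists_of_atTop N
  filter_upwards [eventually_ge_atTop t₀] with u hu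
  classical
  -- After the last time `r ≤ u` with `x r ≤ ρ + ε / 2` only the noise can push `x` up.
  set r := Nat.findGreatest (fun s => x s ≤ ρ + ε / 2) u
  have hxr : x r ≤ ρ + ε / 2 := Nat.findGreatest_spec (P := fun s => x s ≤ ρ + ε / 2) hu hxt₀
  have hNr : N ≤ r := ht₀.trans (Nat.le_findGreatest hu hxt₀)
  rcases (Nat.findGreatest_le u : r ≤ u).eq_or_lt with hru | hru
  · rw [← hru]; linarith
  have hF : ∑ s ∈ Ico (r + 1) u, γ s * F s ≤ 0 := by
    refine sum_nonpos fun s hs => ?_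
    obtain ⟨hrs, hsu⟩ := mem_Ico.1 hs
    have hxs : ρ + ε / 2 < x s := not_le.1 (Nat.findGreatest_is_greatest hrs hsu.le)
    nlinarith [hdriftN s (by omega) hxs, hγ s]
  have hx_u := eq_add_sum_Ico_of_forall_eq_add hru fun t ht => hrecN t (by omega)
  linarith [hstepN r hNr, (abs_lt.1 (hnoiseN (r + 1) (by omega) u hru)).2]

theorem tendsto_of_drift (hrec : ∀ᶠ t in atTop, x (t + 1) = x t + γ t * F t + e t)
    (hγ : ∀ t, 0 ≤ γ t) (hγsum : Tendsto (fun n => ∑ t ∈ range n, γ t) atTop atTop)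
    (he : CauchySeq fun n => ∑ t ∈ range n, e t)
    (hstep : Tendsto (fun t => x (t + 1) - x t) atTop (𝓝 0)) {ρ : ℝ}
    (hdrift : ∀ ε > 0, ∃ c > 0, ∀ᶠ t in atTop,
      (ρ + ε < x t → F t < -c) ∧ (x t < ρ - ε → c < F t)) :
    Tendsto x atTop (𝓝 ρ) := by
  have hupper := eventually_lt_of_drift hrec hγ hγsum he hstep fun ε hε => by
    obtain ⟨c, hc, h⟩ := hdrift ε hε
    exact ⟨c, hc, h.mono fun t ht => ht.1⟩
  have hlower := eventually_lt_of_drift (x := -x) (F := -F) (e := -e) (ρ := -ρ)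
    (hrec.mono fun t ht => by simp only [Pi.neg_apply, ht]; ring) hγ hγsum
    (by simp only [Pi.neg_apply, sum_neg_distrib]; exact he.neg)
    (by simpa only [Pi.neg_apply, neg_sub_neg, neg_sub, neg_zero] using hstep.neg)
    fun ε hε => by
      obtain ⟨c, hc, h⟩ := hdrift ε hε
      exact ⟨c, hc, h.mono fun t ht hxt => by
        simp only [Pi.neg_apply] at hxt ⊢; linarith [ht.2 (by linarith)]⟩
  refine tendsto_order.2 ⟨fun a ha => ?_, fun a ha => ?_⟩
  · filter_upwards [hlower (ρ - a) (by linarith)] with t ht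
    simp only [Pi.neg_apply] at ht; linarith
  · filter_upwards [hupper (a - ρ) (by linarith)] with t ht
    linarith

end Drift

section MartingaleDifference

variable {Ω : Type*} {m0 : MeasurableSpace Ω} {μ : Measure Ω}

variable {𝓕 : Filtration ℕ m0} {d : ℕ → Ω → ℝ} {b : ℕ → ℝ}

lemma stronglyMeasurable_sum_range (hd : ∀ n, StronglyMeasurable[𝓕 (n + 1)] (d n)) (n : ℕ) :
    StronglyMeasurable[𝓕 n] fun ω => ∑ i ∈ range n, d i ω :=
  Finset.stronglyMeasurable_fun_sum _ fun i hi =>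
    (hd i).mono (𝓕.mono (mem_range.1 hi))

lemma ae_abs_sum_range_le (hb : ∀ n, ∀ᵐ ω ∂μ, |d n ω| ≤ b n) :
    ∀ᵐ ω ∂μ, ∀ n, |∑ i ∈ range n, d i ω| ≤ ∑ i ∈ range n, b i := by
  filter_upwards [ae_all_iff.2 hb] with ω hω n
  exact (abs_sum_le_sum_abs _ _).trans (sum_le_sum fun i _ => hω i)

variable [IsFiniteMeasure μ]

lemma integral_mul_eq_zero_of_condExp_eq_zero {m : MeasurableSpace Ω}
    (hm : m ≤ m0) {f g : Ω → ℝ} (hf : StronglyMeasurable[m] f) (hfg : Integrable (f * g) μ)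
    (hg : Integrable g μ) (hcond : μ[g|m] =ᵐ[μ] 0) :
    ∫ ω, f ω * g ω ∂μ = 0 := by
  have hfg0 : μ[f * g|m] =ᵐ[μ] 0 := by
    filter_upwards [condExp_mul_of_stronglyMeasurable_left hf hfg hg, hcond] with ω h1 h2
    simp [h1, h2]
  calc ∫ ω, f ω * g ω ∂μ = ∫ ω, μ[f * g|m] ω ∂μ := (integral_condExp hm).symm
    _ = 0 := by simp [integral_congr_ae hfg0]

lemma eLpNorm_one_le_of_integral_sq_le {f : Ω → ℝ} (hf : Integrable f μ)
    (hf2 : Integrable (fun ω => f ω ^ 2) μ) {K : ℝ} (hK : ∫ ω, f ω ^ 2 ∂μ ≤ K) :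
    eLpNorm f 1 μ ≤ ENNReal.ofReal ((K + μ.real Set.univ) / 2) := by
  rw [eLpNorm_one_eq_lintegral_enorm, ← ofReal_integral_norm_eq_lintegral_enorm hf]
  refine ENNReal.ofReal_le_ofReal ?_
  calc ∫ ω, ‖f ω‖ ∂μ ≤ ∫ ω, (f ω ^ 2 + 1) / 2 ∂μ :=
        integral_mono hf.norm ((hf2.add (integrable_const 1)).div_const 2) fun ω => by
          simp only [Real.norm_eq_abs]
          nlinarith [sq_abs (f ω), sq_nonneg (|f ω| - 1)]
    _ = (∫ ω, f ω ^ 2 ∂μ + μ.real Set.univ) / 2 := by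
        rw [integral_div, integral_add hf2 (integrable_const 1)]
        simp
    _ ≤ (K + μ.real Set.univ) / 2 := by linarith

lemma integrable_sq_sum_range (hd : ∀ n, StronglyMeasurable[𝓕 (n + 1)] (d n))
    (hb : ∀ n, ∀ᵐ ω ∂μ, |d n ω| ≤ b n) (n : ℕ) :
    Integrable (fun ω => (∑ i ∈ range n, d i ω) ^ 2) μ :=
  .of_bound (((stronglyMeasurable_sum_range hd n).mono (𝓕.le n)).pow 2).aestronglyMeasurable
    ((∑ i ∈ range n, b i) ^ 2) <| (ae_abs_sum_range_le hb).mono fun ω h => by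
      rw [norm_pow, Real.norm_eq_abs]; exact pow_le_pow_left₀ (abs_nonneg _) (h n) 2

lemma integral_sq_sum_range_le (hd : ∀ n, StronglyMeasurable[𝓕 (n + 1)] (d n))
    (hcond : ∀ n, μ[d n|𝓕 n] =ᵐ[μ] 0) (hb : ∀ n, ∀ᵐ ω ∂μ, |d n ω| ≤ b n) (n : ℕ) :
    ∫ ω, (∑ i ∈ range n, d i ω) ^ 2 ∂μ ≤ μ.real Set.univ * ∑ i ∈ range n, b i ^ 2 := by
  induction n with
  | zero => simp
  | succ n ih =>
    set S := fun ω => ∑ i ∈ range n, d i ω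
    have hS := stronglyMeasurable_sum_range hd n
    have hSm : StronglyMeasurable[m0] S := hS.mono (𝓕.le n)
    have hdm : StronglyMeasurable[m0] (d n) := (hd n).mono (𝓕.le (n + 1))
    have hSb := ae_abs_sum_range_le hb
    have hS2 : Integrable (fun ω => S ω ^ 2) μ := integrable_sq_sum_range hd hb n
    have hd2 : Integrable (fun ω => d n ω ^ 2) μ := .of_bound (hdm.pow 2).aestronglyMeasurable
      (b n ^ 2) <| (hb n).mono fun ω h => by
        rw [norm_pow, Real.norm_eq_abs]; exact pow_le_pow_left₀ (abs_nonneg _) h 2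
    have hSd : Integrable (S * d n) μ := .of_bound (hSm.mul hdm).aestronglyMeasurable
      ((∑ i ∈ range n, b i) * b n) <| (hSb.and (hb n)).mono fun ω h => by
        rw [Pi.mul_apply, norm_mul, Real.norm_eq_abs, Real.norm_eq_abs]
        exact mul_le_mul (h.1 n) h.2 (abs_nonneg _) ((abs_nonneg _).trans (h.1 n))
    have hcross : ∫ ω, S ω * d n ω ∂μ = 0 := integral_mul_eq_zero_of_condExp_eq_zero (𝓕.le n) hS
      hSd (.of_bound hdm.aestronglyMeasurable _ (hb n)) (hcond n)
    have hd2_le : ∫ ω, d n ω ^ 2 ∂μ ≤ μ.real Set.univ * b n ^ 2 := by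
      calc ∫ ω, d n ω ^ 2 ∂μ ≤ ∫ _, b n ^ 2 ∂μ := integral_mono_ae hd2 (integrable_const _) <|
            (hb n).mono fun ω h => by simpa only [sq_abs] using pow_le_pow_left₀ (abs_nonneg _) h 2
        _ = μ.real Set.univ * b n ^ 2 := by simp
    calc ∫ ω, (∑ i ∈ range (n + 1), d i ω) ^ 2 ∂μ
        = ∫ ω, S ω ^ 2 + 2 * (S ω * d n ω) + d n ω ^ 2 ∂μ := by
          simp only [sum_range_succ, add_sq, mul_assoc, S]
      _ = ∫ ω, S ω ^ 2 ∂μ + 2 * ∫ ω, S ω * d n ω ∂μ + ∫ ω, d n ω ^ 2 ∂μ := by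
          rw [integral_add, integral_add, integral_const_mul]
          exacts [hS2, hSd.const_mul 2, hS2.add (hSd.const_mul 2), hd2]
      _ ≤ μ.real Set.univ * ∑ i ∈ range (n + 1), b i ^ 2 := by
        rw [hcross, sum_range_succ, mul_add]; linarith

theorem ae_exists_tendsto_sum_range_of_condExp_eq_zero
    (hd : ∀ n, StronglyMeasurable[𝓕 (n + 1)] (d n)) (hcond : ∀ n, μ[d n|𝓕 n] =ᵐ[μ] 0)
    (hb : ∀ n, ∀ᵐ ω ∂μ, |d n ω| ≤ b n) (hb2 : Summable fun n => b n ^ 2) :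
    ∀ᵐ ω ∂μ, ∃ L, Tendsto (fun n => ∑ i ∈ range n, d i ω) atTop (𝓝 L) := by
  set M : ℕ → Ω → ℝ := fun n ω => ∑ i ∈ range n, d i ω
  have hM : ∀ n, StronglyMeasurable[𝓕 n] (M n) := stronglyMeasurable_sum_range hd
  have hMint : ∀ n, Integrable (M n) μ := fun n =>
    .of_bound ((hM n).mono (𝓕.le n)).aestronglyMeasurable _
      ((ae_abs_sum_range_le hb).mono fun ω h => h n)
  have hmart : Martingale M 𝓕 μ := martingale_of_condExp_sub_eq_zero_nat hM hMint fun n => by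
    have hincr : M (n + 1) - M n = d n := by funext ω; simp [M, sum_range_succ]
    rw [hincr]; exact hcond n
  set K := μ.real Set.univ * ∑' n, b n ^ 2
  refine hmart.submartingale.exists_ae_tendsto_of_bdd
    (R := ((K + μ.real Set.univ) / 2).toNNReal) fun n => ?_
  rw [ENNReal.ofNNReal_toNNReal]
  refine eLpNorm_one_le_of_integral_sq_le (hMint n) (integrable_sq_sum_range hd hb n) ?_
  refine (integral_sq_sum_range_le hd hcond hb n).trans ?_
  exact mul_le_mul_of_nonneg_left (hb2.sum_le_tsum _ fun i _ => sq_nonneg (b i)) measureReal_nonneg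

theorem ae_exists_tendsto_sum_range_inv_succ_mul_sub_condExp
    {ξ : ℕ → Ω → ℝ} (hξ : ∀ n, StronglyMeasurable[𝓕 (n + 1)] (ξ n)) {C : ℝ}
    (hξC : ∀ n, ∀ᵐ ω ∂μ, |ξ n ω| ≤ C) :
    ∀ᵐ ω ∂μ, ∃ L, Tendsto (fun n => ∑ i ∈ range n, (i + 1 : ℝ)⁻¹ * (ξ i ω - μ[ξ i|𝓕 i] ω))
      atTop (𝓝 L) := by
  have hξint n : Integrable (ξ n) μ :=
    .of_bound ((hξ n).mono (𝓕.le _)).aestronglyMeasurable _ (hξC n)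
  refine ae_exists_tendsto_sum_range_of_condExp_eq_zero (𝓕 := 𝓕)
    (d := fun n => (n + 1 : ℝ)⁻¹ • (ξ n - μ[ξ n|𝓕 n])) (b := fun n => 2 * C / (n + 1))
    (fun n => ?_) (fun n => ?_) (fun n => ?_) ?_
  · exact ((hξ n).sub (stronglyMeasurable_condExp.mono (𝓕.mono n.le_succ))).const_smul _
  · have hsub : μ[ξ n - μ[ξ n|𝓕 n]|𝓕 n] =ᵐ[μ] 0 := by
      have h := condExp_sub (m := 𝓕 n) (hξint n) (integrable_condExp (m := 𝓕 n) (f := ξ n))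
      rwa [condExp_of_stronglyMeasurable (𝓕.le n) stronglyMeasurable_condExp integrable_condExp,
        sub_self] at h
    filter_upwards [condExp_smul (μ := μ) (n + 1 : ℝ)⁻¹ (ξ n - μ[ξ n|𝓕 n]) (𝓕 n), hsub]
      with ω h1 h2
    simp [h1, h2]
  · filter_upwards [hξC n, ae_bdd_abs_condExp_of_ae_bdd_abs (m := 𝓕 n) (hξC n)] with ω h1 h2
    rw [Pi.smul_apply, smul_eq_mul, abs_mul, abs_inv, abs_of_pos (by positivity : (0 : ℝ) < n + 1),
      inv_mul_eq_div]
    gcongr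
    rw [Pi.sub_apply]
    linarith [abs_sub (ξ n ω) (μ[ξ n|𝓕 n] ω)]
  · refine (((summable_nat_add_iff 1).2 (Real.summable_one_div_nat_pow.2 one_lt_two)).mul_left
      ((2 * C) ^ 2)).congr fun n => ?_
    push_cast
    field_simp

end MartingaleDifference

section Proportion

variable {P : ℕ → Prop} [DecidablePred P] {p : ℕ → ℝ}

lemma proportion_mem_Icc (hp : ∀ t ≥ 1, p t = #{s ∈ Icc 1 t | P s} / t) {t : ℕ} (ht : 1 ≤ t) :
    p t ∈ Set.Icc 0 1 := by
  have hcard : #{s ∈ Icc 1 t | P s} ≤ t := (card_filter_le _ _).trans (by simp)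
  rw [hp t ht]
  exact ⟨by positivity, div_le_one_of_le₀ (by exact_mod_cast hcard) t.cast_nonneg⟩

lemma proportion_succ (hp : ∀ t ≥ 1, p t = #{s ∈ Icc 1 t | P s} / t) {t : ℕ} (ht : 1 ≤ t) :
    p (t + 1) = p t + ((if P (t + 1) then 1 else 0) - p t) / (t + 1) := by
  have hcount : (#{s ∈ Icc 1 (t + 1) | P s} : ℝ) =
      #{s ∈ Icc 1 t | P s} + if P (t + 1) then 1 else 0 := by
    rw [natCast_card_filter, natCast_card_filter, sum_Icc_succ_top (by omega)]
  have ht' : (t : ℝ) ≠ 0 := by positivity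
  rw [hp (t + 1) (by omega), hp t ht, hcount]
  push_cast
  field_simp
  ring

lemma tendsto_proportion_succ_sub (hp : ∀ t ≥ 1, p t = #{s ∈ Icc 1 t | P s} / t) :
    Tendsto (fun t => p (t + 1) - p t) atTop (𝓝 0) := by
  refine squeeze_zero_norm' ?_ tendsto_one_div_add_atTop_nhds_zero_nat
  filter_upwards [eventually_ge_atTop 1] with t ht
  obtain ⟨h0, h1⟩ := proportion_mem_Icc hp ht
  rw [proportion_succ hp ht, add_sub_cancel_left, Real.norm_eq_abs, abs_div,
    abs_of_pos (by positivity : (0 : ℝ) < t + 1)]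
  gcongr
  split_ifs <;> rw [abs_le] <;> constructor <;> linarith

end Proportion

theorem stmt_0_general
    {Ω : Type*} {𝓖 : MeasurableSpace Ω} {μ : Measure Ω} [IsProbabilityMeasure μ]
    (𝓕 : Filtration ℕ 𝓖)
    (A : ℕ → Ω → ℕ)
    (hA_adapted : ∀ t, Measurable[𝓕 t] (A t))
    (phat : ℕ → Ω → ℝ)
    (h_phat : ∀ t ≥ 1, ∀ ω,
      phat t ω = ((Finset.Icc 1 t).filter (fun s => A s ω = 0)).card / t)
    (π : ℕ → Ω → ℝ)
    (hπ : ∀ t ≥ 1, π t =ᵐ[μ]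
      μ[Set.indicator {ω | A (t + 1) ω = 0} (fun _ => (1 : ℝ)) | 𝓕 t])
    (F : ℕ → Ω → ℝ) (hF : ∀ t ≥ 1, ∀ ω, F t ω = π t ω - phat t ω)
    (ρ₀ : ℝ)
    (h_drift : ∀ᵐ ω ∂μ, ∀ ε > (0 : ℝ), ∃ T : ℕ, ∃ c > (0 : ℝ), ∀ t > T,
      (phat t ω > ρ₀ + ε → F t ω < -c) ∧ (phat t ω < ρ₀ - ε → F t ω > c)) :
    ∀ᵐ ω ∂μ, Tendsto (fun t => phat t ω) atTop (nhds ρ₀) := by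
  set ξ : ℕ → Ω → ℝ := fun t => Set.indicator {ω | A (t + 1) ω = 0} (fun _ => (1 : ℝ))
  have hξ_apply t ω : ξ t ω = if A (t + 1) ω = 0 then 1 else 0 := Set.indicator_apply _ _ _
  have hξ_meas t : StronglyMeasurable[𝓕 (t + 1)] (ξ t) :=
    (measurable_const.indicator (hA_adapted (t + 1) (measurableSet_singleton 0))).stronglyMeasurable
  have hnoise := ae_exists_tendsto_sum_range_inv_succ_mul_sub_condExp (μ := μ) hξ_meas (C := 1)
    fun t => ae_of_all _ fun ω => by rw [hξ_apply]; split_ifs <;> simp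
  have hπ_ae : ∀ᵐ ω ∂μ, ∀ t ≥ 1, π t ω = μ[ξ t|𝓕 t] ω :=
    ae_all_iff.2 fun t => eventually_imp_distrib_left.2 (hπ t)
  filter_upwards [hnoise, hπ_ae, h_drift] with ω ⟨L, hL⟩ hπω hdrift
  have hp t (ht : t ≥ 1) := h_phat t ht ω
  refine tendsto_of_drift (γ := fun t => (t + 1 : ℝ)⁻¹) (F := fun t => F t ω) ?_
    (fun t => by positivity) ?_ hL.cauchySeq (tendsto_proportion_succ_sub hp) fun ε hε => ?_
  · filter_upwards [eventually_ge_atTop 1] with t ht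
    rw [proportion_succ hp ht, hF t ht, hπω t ht, hξ_apply]
    ring
  · simpa only [one_div] using Real.tendsto_sum_range_one_div_nat_succ_atTop
  · obtain ⟨T, c, hc, h⟩ := hdrift ε hε
    exact ⟨c, hc, (eventually_gt_atTop T).mono h⟩

/-- **Lemma 1 (BUD asymptotics, stochastic approximation lemma).**
Let `(Ω, 𝓖, μ)` be a probability space with a filtration `(𝓕 t)`, and `(A t)` a
sequence of `{0,1}`-valued random variables adapted to the filtration. With
`p̂ t ω` the proportion of the first `t` assignments equal to `0`, `π t` a version
of the conditional probability `P(A (t+1) = 0 | 𝓕 t)`, and `F t = π t - p̂ t`,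
if almost surely for every `ε > 0` there are a (random) time `T` and a constant
`c > 0` such that for all `t > T`, `F t < -c` whenever `p̂ t > ρ₀ + ε` and
`F t > c` whenever `p̂ t < ρ₀ - ε`, then `p̂ t → ρ₀` almost surely. -/
theorem stmt_0
    {Ω : Type*} {𝓖 : MeasurableSpace Ω} {μ : Measure Ω} [IsProbabilityMeasure μ]
    (𝓕 : Filtration ℕ 𝓖)
    (A : ℕ → Ω → ℕ) (hA01 : ∀ t ω, A t ω = 0 ∨ A t ω = 1)
    (hA_adapted : ∀ t, Measurable[𝓕 t] (A t))
    (phat : ℕ → Ω → ℝ)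
    (h_phat : ∀ t ≥ 1, ∀ ω,
      phat t ω = ((Finset.Icc 1 t).filter (fun s => A s ω = 0)).card / t)
    (π : ℕ → Ω → ℝ)
    (hπ : ∀ t ≥ 1, π t =ᵐ[μ]
      μ[Set.indicator {ω | A (t + 1) ω = 0} (fun _ => (1 : ℝ)) | 𝓕 t])
    (F : ℕ → Ω → ℝ) (hF : ∀ t ≥ 1, ∀ ω, F t ω = π t ω - phat t ω)
    (ρ₀ : ℝ) (hρ₀ : ρ₀ ∈ Set.Icc (0 : ℝ) 1)
    (h_drift : ∀ᵐ ω ∂μ, ∀ ε > (0 : ℝ), ∃ T : ℕ, ∃ c > (0 : ℝ), ∀ t > T,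
      (phat t ω > ρ₀ + ε → F t ω < -c) ∧ (phat t ω < ρ₀ - ε → F t ω > c)) :
    ∀ᵐ ω ∂μ, Tendsto (fun t => phat t ω) atTop (nhds ρ₀) :=
  stmt_0_general 𝓕 A hA_adapted phat h_phat π hπ F hF ρ₀ h_drift
end

section
/- Fix K ≥ 1 and for t ≥ 1 let (p̂_{0,t}, …, p̂_{K,t}) be nonnegative real numbers with Σ_{a=0}^K p̂_{a,t} = 1. Suppose that for every ordered pair of distinct indices a₁ ≠ a₂ in {0,…,K} there is a number ρ̃_{a₁,a₂} ∈ (0,1) such that p̂_{a₁,t}/(p̂_{a₁,t} + p̂_{a₂,t}) → ρ̃_{a₁,a₂} as t → ∞ (in particular p̂_{a₁,t} + p̂_{a₂,t} > 0 for all sufficiently large t, for every pair). Then there exists a vector ρ = (ρ_0, …, ρ_K) with ρ_a ∈ (0,1) for all a, Σ_{a=0}^K ρ_a = 1, and ρ_{a₁} = ρ̃_{a₁,a₂}·(ρ_{a₁} + ρ_{a₂}) for all pairs a₁ ≠ a₂, such that p̂_{a,t} → ρ_a as t → ∞ for every a = 0, …, K. -/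
/-!
Compare every arm with arm `0`. The pairwise share `p a / (p a + p 0) → ρ̃ a 0` turns into
`p a / p 0 → r a := ρ̃ a 0 / (1 - ρ̃ a 0)`. Summing these ratios and using `∑ p = 1` gives
`1 / p 0 → ∑ r`, hence `p a → r a / ∑ r`. The limit `ρ = r / ∑ r` inherits the pairwise
relations from the pairwise shares by uniqueness of limits.
-/

open Filter Topology Finset

section Limits

variable {α 𝕜 : Type*} [NormedField 𝕜] {l : Filter α} {f g : α → 𝕜} {c : 𝕜}

theorem eventually_ne_zero_of_tendsto_div (h : Tendsto (fun t => f t / g t) l (𝓝 c))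
    (hc : c ≠ 0) : ∀ᶠ t in l, f t ≠ 0 ∧ g t ≠ 0 :=
  (h.eventually_ne hc).mono fun _ ht => div_ne_zero_iff.mp ht

theorem tendsto_self_div_self_of_tendsto_div (h : Tendsto (fun t => f t / g t) l (𝓝 c))
    (hc : c ≠ 0) : Tendsto (fun t => f t / f t) l (𝓝 1) :=
  tendsto_const_nhds.congr' <|
    (eventually_ne_zero_of_tendsto_div h hc).mono fun _ ht => (div_self ht.1).symm

theorem tendsto_div_of_tendsto_div_add (h : Tendsto (fun t => f t / (f t + g t)) l (𝓝 c))
    (hc₀ : c ≠ 0) (hc₁ : c ≠ 1) : Tendsto (fun t => f t / g t) l (𝓝 (c / (1 - c))) := by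
  have hden : ∀ᶠ t in l, f t + g t ≠ 0 :=
    (eventually_ne_zero_of_tendsto_div h hc₀).mono fun _ ht => ht.2
  have hcompl : Tendsto (fun t => g t / (f t + g t)) l (𝓝 (1 - c)) :=
    (tendsto_const_nhds.sub h).congr' <| hden.mono fun t ht => by
      rw [eq_div_iff ht, sub_mul, div_mul_cancel₀ _ ht, one_mul, add_sub_cancel_left]
  exact (h.div hcompl (sub_ne_zero.mpr hc₁.symm)).congr' <|
    hden.mono fun t ht => div_div_div_cancel_right₀ ht _ _

theorem eq_mul_add_of_tendsto_div_add [l.NeBot] {x y : 𝕜} (hf : Tendsto f l (𝓝 x))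
    (hg : Tendsto g l (𝓝 y)) (hxy : x + y ≠ 0)
    (h : Tendsto (fun t => f t / (f t + g t)) l (𝓝 c)) : x = c * (x + y) := by
  rw [tendsto_nhds_unique h (hf.div (hf.add hg) hxy), div_mul_cancel₀ _ hxy]

theorem tendsto_div_sum_of_tendsto_div {ι : Type*} [Fintype ι] {p : α → ι → 𝕜}
    {r : ι → 𝕜} {a₀ : ι} (hsum : ∀ᶠ t in l, ∑ a, p t a = 1)
    (hratio : ∀ a, Tendsto (fun t => p t a / p t a₀) l (𝓝 (r a))) (hr : ∑ a, r a ≠ 0)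
    (a : ι) : Tendsto (fun t => p t a) l (𝓝 (r a / ∑ b, r b)) := by
  have hinv : Tendsto (fun t => (p t a₀)⁻¹) l (𝓝 (∑ b, r b)) :=
    (tendsto_finsetSum _ fun b _ => hratio b).congr' <|
      hsum.mono fun t ht => by rw [← Finset.sum_div, ht, one_div]
  have h₀ : Tendsto (fun t => p t a₀) l (𝓝 (∑ b, r b)⁻¹) := by
    simpa only [inv_inv] using hinv.inv₀ hr
  rw [div_eq_mul_inv]
  exact ((hratio a).mul h₀).congr' <|
    (h₀.eventually_ne (inv_ne_zero hr)).mono fun t ht => div_mul_cancel₀ _ ht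

end Limits

theorem div_sum_mem_Ioo {ι : Type*} [Fintype ι] [Nontrivial ι] {r : ι → ℝ}
    (hr : ∀ a, 0 < r a) (a : ι) : r a / ∑ b, r b ∈ Set.Ioo 0 1 := by
  have hS : 0 < ∑ b, r b := Finset.sum_pos (fun b _ => hr b) univ_nonempty
  obtain ⟨b, hb⟩ := exists_ne a
  refine ⟨div_pos (hr a) hS, (div_lt_one hS).mpr ?_⟩
  exact Finset.single_lt_sum hb (mem_univ a) (mem_univ b) (hr b) fun k _ _ => (hr k).le

theorem stmt_1_general (K : ℕ) (hK : 1 ≤ K)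
    (phat : ℕ → Fin (K + 1) → ℝ)
    (h_sum : ∀ t ≥ 1, ∑ a, phat t a = 1)
    (ρt : Fin (K + 1) → Fin (K + 1) → ℝ)
    (hρt_mem : ∀ a₁ a₂, a₁ ≠ a₂ → ρt a₁ a₂ ∈ Set.Ioo (0 : ℝ) 1)
    (h_conv : ∀ a₁ a₂, a₁ ≠ a₂ →
      Tendsto (fun t => phat t a₁ / (phat t a₁ + phat t a₂)) atTop (nhds (ρt a₁ a₂))) :
    ∃ ρ : Fin (K + 1) → ℝ,
      (∀ a, ρ a ∈ Set.Ioo (0 : ℝ) 1) ∧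
      (∑ a, ρ a = 1) ∧
      (∀ a₁ a₂, a₁ ≠ a₂ → ρ a₁ = ρt a₁ a₂ * (ρ a₁ + ρ a₂)) ∧
      (∀ a, Tendsto (fun t => phat t a) atTop (nhds (ρ a))) := by
  have : Nontrivial (Fin (K + 1)) := Fin.nontrivial_iff_two_le.mpr (by omega)
  set r : Fin (K + 1) → ℝ := fun a => if a = 0 then 1 else ρt a 0 / (1 - ρt a 0)
  have hr_pos : ∀ a, 0 < r a := fun a => by
    by_cases ha : a = 0
    · simp [r, ha]
    · simpa [r, ha] using div_pos (hρt_mem a 0 ha).1 (sub_pos.mpr (hρt_mem a 0 ha).2)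
  have hratio : ∀ a, Tendsto (fun t => phat t a / phat t 0) atTop (𝓝 (r a)) := fun a => by
    by_cases ha : a = 0
    · obtain ⟨b, hb⟩ := exists_ne (0 : Fin (K + 1))
      simpa [r, ha] using
        tendsto_self_div_self_of_tendsto_div (h_conv 0 b hb.symm) (hρt_mem 0 b hb.symm).1.ne'
    · simpa [r, ha] using tendsto_div_of_tendsto_div_add (h_conv a 0 ha)
        (hρt_mem a 0 ha).1.ne' (hρt_mem a 0 ha).2.ne
  have hS : 0 < ∑ b, r b := Finset.sum_pos (fun b _ => hr_pos b) univ_nonempty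
  have hlim := tendsto_div_sum_of_tendsto_div (eventually_atTop.mpr ⟨1, h_sum⟩) hratio hS.ne'
  refine ⟨fun a => r a / ∑ b, r b, div_sum_mem_Ioo hr_pos,
    by rw [← Finset.sum_div, div_self hS.ne'],
    fun a₁ a₂ h => eq_mul_add_of_tendsto_div_add (hlim a₁) (hlim a₂) ?_ (h_conv a₁ a₂ h),
    hlim⟩
  exact (add_pos (div_sum_mem_Ioo hr_pos a₁).1 (div_sum_mem_Ioo hr_pos a₂).1).ne'

/-- **Remark 1 (deterministic content).** If all pairwise allocation proportions
`p̂ a₁ t / (p̂ a₁ t + p̂ a₂ t)` converge to limits `ρ̃ a₁ a₂ ∈ (0,1)`, then the whole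
vector of allocation proportions converges to a vector `ρ` with entries in `(0,1)`,
summing to one, and solving `ρ a₁ = ρ̃ a₁ a₂ · (ρ a₁ + ρ a₂)` for all pairs. -/
theorem stmt_1 (K : ℕ) (hK : 1 ≤ K)
    (phat : ℕ → Fin (K + 1) → ℝ)
    (h_nonneg : ∀ t ≥ 1, ∀ a, 0 ≤ phat t a)
    (h_sum : ∀ t ≥ 1, ∑ a, phat t a = 1)
    (ρt : Fin (K + 1) → Fin (K + 1) → ℝ)
    (hρt_mem : ∀ a₁ a₂, a₁ ≠ a₂ → ρt a₁ a₂ ∈ Set.Ioo (0 : ℝ) 1)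
    (h_pos : ∀ a₁ a₂, a₁ ≠ a₂ → ∀ᶠ t in atTop, 0 < phat t a₁ + phat t a₂)
    (h_conv : ∀ a₁ a₂, a₁ ≠ a₂ →
      Tendsto (fun t => phat t a₁ / (phat t a₁ + phat t a₂)) atTop (nhds (ρt a₁ a₂))) :
    ∃ ρ : Fin (K + 1) → ℝ,
      (∀ a, ρ a ∈ Set.Ioo (0 : ℝ) 1) ∧
      (∑ a, ρ a = 1) ∧
      (∀ a₁ a₂, a₁ ≠ a₂ → ρ a₁ = ρt a₁ a₂ * (ρ a₁ + ρ a₂)) ∧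
      (∀ a, Tendsto (fun t => phat t a) atTop (nhds (ρ a))) :=
  stmt_1_general K hK phat h_sum ρt hρt_mem h_conv
end

section
/- Let σ_0, σ_1, σ > 0, h > 0, and δ ∈ (0, 1/3). For a = 0,1 define Δ_a(n) = σ_a² / ((σ_a²/σ² + n)(σ_a²/σ² + 1 + n)) for n ∈ ℕ. Let (n_{0,t})_{t≥1} be any sequence of natural numbers with 0 ≤ n_{0,t} ≤ t^{2/3+δ} for all t, and set n_{1,t} = t − n_{0,t}. Then Δ_1(n_{1,t}) / Δ_0(n_{0,t}) → 0 as t → ∞, and consequently Δ_0(n_{0,t})^h / (Δ_0(n_{0,t})^h + Δ_1(n_{1,t})^h) → 1 as t → ∞. -/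
open Filter

/-- The expected one-step information gain of an arm with sampling variance `σa²`
after `n` observations, under a `N(0, σ²)` prior:
`Δ(n) = σa² / ((σa²/σ² + n) (σa²/σ² + 1 + n))`. -/
noncomputable def budGain (σ σa : ℝ) (n : ℕ) : ℝ :=
  σa ^ 2 / ((σa ^ 2 / σ ^ 2 + n) * (σa ^ 2 / σ ^ 2 + 1 + n))

lemma budGain_pos (σ σa : ℝ) (hσ : 0 < σ) (hσa : 0 < σa) (n : ℕ) :
    0 < budGain σ σa n := by
  unfold budGain
  have h1 : 0 < σa ^ 2 / σ ^ 2 := by positivity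
  have h2 : (0:ℝ) ≤ n := Nat.cast_nonneg n
  positivity

/-- **Example 1, boundary-region estimate.** If the arm-0 counts satisfy
`n₀ t ≤ t^{2/3+δ}` with `δ ∈ (0,1/3)` and `n₁ t = t - n₀ t`, then
`Δ₁(n₁ t)/Δ₀(n₀ t) → 0` and `Δ₀(n₀ t)^h / (Δ₀(n₀ t)^h + Δ₁(n₁ t)^h) → 1`. -/
theorem stmt_7 (σ σ₀ σ₁ h δ : ℝ)
    (hσ : 0 < σ) (hσ₀ : 0 < σ₀) (hσ₁ : 0 < σ₁) (hh : 0 < h)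
    (hδ : δ ∈ Set.Ioo (0 : ℝ) (1 / 3))
    (n₀ : ℕ → ℕ) (hn₀_le : ∀ t, n₀ t ≤ t)
    (hn₀ : ∀ t, (n₀ t : ℝ) ≤ (t : ℝ) ^ ((2 : ℝ) / 3 + δ)) :
    Tendsto (fun t => budGain σ σ₁ (t - n₀ t) / budGain σ σ₀ (n₀ t))
      atTop (nhds 0) ∧
    Tendsto (fun t => budGain σ σ₀ (n₀ t) ^ h /
        (budGain σ σ₀ (n₀ t) ^ h + budGain σ σ₁ (t - n₀ t) ^ h))
      atTop (nhds 1) := by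
  obtain ⟨hδ0, hδ1⟩ := hδ
  set a : ℝ := (2:ℝ)/3 + δ with ha
  have ha1 : a < 1 := by simp only [ha]; linarith
  have ha0 : 0 < a := by simp only [ha]; linarith
  set c₀ : ℝ := σ₀ ^ 2 / σ ^ 2 with hc₀
  have hc₀pos : 0 < c₀ := by positivity
  -- the real-variable bound function
  set g : ℝ → ℝ := fun s => σ₁ ^ 2 * (c₀ + 1 + s ^ a) ^ 2 / (σ₀ ^ 2 * (s / 2) ^ 2)
    with hg
  -- t ^ (a - 1) → 0 over ℝ
  have hpow : Tendsto (fun s : ℝ => s ^ (a - 1)) atTop (nhds 0) := by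
    have := tendsto_rpow_neg_atTop (y := 1 - a) (by linarith)
    simpa using this.congr' (by
      filter_upwards [eventually_gt_atTop (0:ℝ)] with s hs
      norm_num)
  -- g → 0 over ℝ
  have hgt : Tendsto g atTop (nhds 0) := by
    have h1 : Tendsto (fun s : ℝ => (c₀ + 1) / s) atTop (nhds 0) :=
      tendsto_const_nhds.div_atTop tendsto_id
    have hq : Tendsto (fun s : ℝ => (c₀ + 1 + s ^ a) / (s / 2)) atTop (nhds 0) := by
      have heq : (fun s : ℝ => (c₀ + 1 + s ^ a) / (s / 2)) =ᶠ[atTop]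
          (fun s : ℝ => 2 * ((c₀ + 1) / s + s ^ (a - 1))) := by
        filter_upwards [eventually_gt_atTop (0:ℝ)] with s hs
        have hsa : s ^ (a - 1) = s ^ a / s := by
          rw [Real.rpow_sub hs, Real.rpow_one]
        rw [hsa]
        field_simp
      have : Tendsto (fun s : ℝ => 2 * ((c₀ + 1) / s + s ^ (a - 1))) atTop
          (nhds (2 * (0 + 0))) := (h1.add hpow).const_mul 2
      simpa using this.congr' heq.symm
    have : Tendsto (fun s : ℝ => σ₁ ^ 2 / σ₀ ^ 2 *
        ((c₀ + 1 + s ^ a) / (s / 2)) ^ 2) atTop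
        (nhds (σ₁ ^ 2 / σ₀ ^ 2 * 0 ^ 2)) :=
      ((hq.pow 2).const_mul _)
    simp only [ne_eq, OfNat.ofNat_ne_zero, not_false_eq_true, zero_pow, mul_zero] at this
    refine this.congr (fun s => ?_)
    rw [hg]
    rw [div_pow, div_mul_div_comm]
  -- g over ℕ
  have hgtN : Tendsto (fun t : ℕ => g (t : ℝ)) atTop (nhds 0) :=
    hgt.comp tendsto_natCast_atTop_atTop
  have hpowN : Tendsto (fun t : ℕ => ((t:ℝ)) ^ (a - 1)) atTop (nhds 0) :=
    hpow.comp tendsto_natCast_atTop_atTop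
  -- eventual bound
  have hbound : ∀ᶠ t : ℕ in atTop,
      budGain σ σ₁ (t - n₀ t) / budGain σ σ₀ (n₀ t) ≤ g (t : ℝ) := by
    have hev : ∀ᶠ t : ℕ in atTop, ((t:ℝ)) ^ (a - 1) ≤ 1 / 2 :=
      hpowN.eventually (eventually_le_nhds (by norm_num))
    filter_upwards [hev, eventually_ge_atTop 1] with t hta ht1
    have htpos : (0:ℝ) < t := by exact_mod_cast ht1
    have hx : (t:ℝ) ^ a ≤ t / 2 := by
      have heq2 : (t:ℝ) ^ a = (t:ℝ) ^ (a - 1) * t := by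
        rw [Real.rpow_sub htpos, Real.rpow_one]
        field_simp
      rw [heq2]
      calc (t:ℝ) ^ (a - 1) * t ≤ (1/2) * t := by
            apply mul_le_mul_of_nonneg_right hta htpos.le
        _ = t / 2 := by ring
    set x : ℝ := (t:ℝ) ^ a with hxdef
    have hn0x : (n₀ t : ℝ) ≤ x := hn₀ t
    have hn1 : ((t - n₀ t : ℕ) : ℝ) = (t:ℝ) - n₀ t := by
      rw [Nat.cast_sub (hn₀_le t)]
    have hn1ge : (t:ℝ) / 2 ≤ ((t - n₀ t : ℕ) : ℝ) := by
      rw [hn1]; linarith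
    -- denominators
    set D₀ : ℝ := (c₀ + n₀ t) * (c₀ + 1 + n₀ t) with hD₀
    set c₁ : ℝ := σ₁ ^ 2 / σ ^ 2 with hc₁
    have hc₁pos : 0 < c₁ := by positivity
    set D₁ : ℝ := (c₁ + ((t - n₀ t : ℕ):ℝ)) * (c₁ + 1 + ((t - n₀ t : ℕ):ℝ)) with hD₁
    have hn0nn : (0:ℝ) ≤ n₀ t := Nat.cast_nonneg _
    have hn1nn : (0:ℝ) ≤ ((t - n₀ t : ℕ):ℝ) := Nat.cast_nonneg _
    have hD₀pos : 0 < D₀ := by rw [hD₀]; positivity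
    have hD₁pos : 0 < D₁ := by rw [hD₁]; positivity
    have hD₀le : D₀ ≤ (c₀ + 1 + x) ^ 2 := by
      rw [hD₀, sq]
      have hxnn : 0 ≤ x := le_trans hn0nn hn0x
      apply mul_le_mul (by linarith) (by linarith) (by linarith) (by linarith)
    have hD₁ge : ((t:ℝ) / 2) ^ 2 ≤ D₁ := by
      rw [hD₁, sq]
      have h2 : (t:ℝ)/2 ≤ c₁ + ((t - n₀ t : ℕ):ℝ) := by linarith
      have h3 : (t:ℝ)/2 ≤ c₁ + 1 + ((t - n₀ t : ℕ):ℝ) := by linarith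
      apply mul_le_mul h2 h3 (by positivity) (by positivity)
    have hkey : budGain σ σ₁ (t - n₀ t) / budGain σ σ₀ (n₀ t)
        = σ₁ ^ 2 * D₀ / (σ₀ ^ 2 * D₁) := by
      show (σ₁ ^ 2 / D₁) / (σ₀ ^ 2 / D₀) = σ₁ ^ 2 * D₀ / (σ₀ ^ 2 * D₁)
      field_simp
    rw [hkey]
    simp only [hg, ← hxdef]
    have htq : (0:ℝ) < (t:ℝ)/2 := by linarith
    have hB : (0:ℝ) < σ₀ ^ 2 * ((t:ℝ)/2) ^ 2 := by positivity
    have e1 : σ₁ ^ 2 * D₀ ≤ σ₁ ^ 2 * (c₀ + 1 + x) ^ 2 :=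
      mul_le_mul_of_nonneg_left hD₀le (by positivity)
    have e2 : σ₀ ^ 2 * ((t:ℝ)/2) ^ 2 ≤ σ₀ ^ 2 * D₁ :=
      mul_le_mul_of_nonneg_left hD₁ge (by positivity)
    exact div_le_div₀ (by positivity) e1 hB e2
  have hnonneg : ∀ t : ℕ,
      0 ≤ budGain σ σ₁ (t - n₀ t) / budGain σ σ₀ (n₀ t) := fun t =>
    le_of_lt (div_pos (budGain_pos σ σ₁ hσ hσ₁ _) (budGain_pos σ σ₀ hσ hσ₀ _))
  have hr : Tendsto (fun t => budGain σ σ₁ (t - n₀ t) / budGain σ σ₀ (n₀ t))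
      atTop (nhds 0) :=
    squeeze_zero' (Eventually.of_forall hnonneg) hbound hgtN
  refine ⟨hr, ?_⟩
  -- second limit
  have hrh : Tendsto (fun t => (budGain σ σ₁ (t - n₀ t) / budGain σ σ₀ (n₀ t)) ^ h)
      atTop (nhds 0) := by
    have := hr.rpow_const (p := h) (Or.inr hh.le)
    simpa [Real.zero_rpow hh.ne'] using this
  have hmain : Tendsto (fun t : ℕ =>
      1 / (1 + (budGain σ σ₁ (t - n₀ t) / budGain σ σ₀ (n₀ t)) ^ h))
      atTop (nhds 1) := by
    have : Tendsto (fun t : ℕ =>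
        1 / (1 + (budGain σ σ₁ (t - n₀ t) / budGain σ σ₀ (n₀ t)) ^ h))
        atTop (nhds (1 / (1 + 0))) :=
      tendsto_const_nhds.div (tendsto_const_nhds.add hrh) (by norm_num)
    simpa using this
  refine hmain.congr (fun t => ?_)
  have d0 := budGain_pos σ σ₀ hσ hσ₀ (n₀ t)
  have d1 := budGain_pos σ σ₁ hσ hσ₁ (t - n₀ t)
  have h0 : 0 < budGain σ σ₀ (n₀ t) ^ h := Real.rpow_pos_of_pos d0 h
  have h1' : 0 < budGain σ σ₁ (t - n₀ t) ^ h := Real.rpow_pos_of_pos d1 h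
  rw [Real.div_rpow d1.le d0.le]
  rw [div_eq_div_iff (by positivity) (by positivity)]
  field_simp
end
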